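/- arXiv:quant-ph/0506252 — 2 statements merged into one kernel-verified Lean document; each statement's English description precedes it below -/
import Mathlib

section
/- If a two-qubit density matrix ρ satisfies m(ρ) > 1, then ρ is entangled (not separable). -/
open Matrix Kronecker Complex ComplexOrder

noncomputable section
open scoped Classical

/-- Pauli matrices. -/
def pauli : Fin 3 → Matrix (Fin 2) (Fin 2) ℂ
  | 0 => !![0, 1; 1, 0]
  | 1 => !![0, -Complex.I; Complex.I, 0]
  | 2 => !![1, 0; 0, -1]

/-- Kronecker product of two one-qubit operators, reindexed to a 4×4 matrix. -/
def kron4 (A B : Matrix (Fin 2) (Fin 2) ℂ) : Matrix (Fin 4) (Fin 4) ℂ :=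
  Matrix.reindex finProdFinEquiv finProdFinEquiv (A ⊗ₖ B)

/-- A density matrix: positive semidefinite with unit trace. -/
def IsDensity {n : ℕ} (ρ : Matrix (Fin n) (Fin n) ℂ) : Prop :=
  ρ.PosSemidef ∧ ρ.trace = 1

/-- The spin-flipped matrix ρ̃ = (σ₂⊗σ₂) ρ̄ (σ₂⊗σ₂). -/
def tildeMat (ρ : Matrix (Fin 4) (Fin 4) ℂ) : Matrix (Fin 4) (Fin 4) ℂ :=
  kron4 (pauli 1) (pauli 1) * ρ.map (starRingEnd ℂ) * kron4 (pauli 1) (pauli 1)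

/-- Positive square root of a positive semidefinite matrix (0 otherwise). -/
def msqrt {n : ℕ} (A : Matrix (Fin n) (Fin n) ℂ) : Matrix (Fin n) (Fin n) ℂ :=
  if h : A.PosSemidef then (h.1.eigenvectorUnitary : Matrix (Fin n) (Fin n) ℂ) *
    diagonal ((↑) ∘ (Real.sqrt ·) ∘ h.1.eigenvalues) * (star h.1.eigenvectorUnitary : Matrix (Fin n) (Fin n) ℂ) else 0

/-- ρ̂ = √(√ρ ρ̃ √ρ). -/
def hatMat (ρ : Matrix (Fin 4) (Fin 4) ℂ) : Matrix (Fin 4) (Fin 4) ℂ :=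
  msqrt (msqrt ρ * tildeMat ρ * msqrt ρ)

/-- Eigenvalues of a Hermitian matrix (0 otherwise). -/
def evalsC {n : ℕ} (A : Matrix (Fin n) (Fin n) ℂ) : Fin n → ℝ :=
  if h : A.IsHermitian then h.eigenvalues else 0

/-- The concurrence C(ρ) = max(0, 2 λ_max(ρ̂) − tr ρ̂). -/
def concurrence (ρ : Matrix (Fin 4) (Fin 4) ℂ) : ℝ :=
  max 0 (2 * (⨆ i, evalsC (hatMat ρ) i) - ∑ i, evalsC (hatMat ρ) i)

/-- Correlation matrix T_ρ with entries tr(ρ σₙ⊗σₘ). -/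
def Tmat (ρ : Matrix (Fin 4) (Fin 4) ℂ) : Matrix (Fin 3) (Fin 3) ℝ :=
  fun n m => ((ρ * kron4 (pauli n) (pauli m)).trace).re

/-- U_ρ = T_ρᵀ T_ρ. -/
def Umat (ρ : Matrix (Fin 4) (Fin 4) ℂ) : Matrix (Fin 3) (Fin 3) ℝ :=
  (Tmat ρ)ᵀ * Tmat ρ

/-- Eigenvalues of a real symmetric matrix (0 otherwise). -/
def evalsR {n : ℕ} (A : Matrix (Fin n) (Fin n) ℝ) : Fin n → ℝ :=
  if h : A.IsHermitian then h.eigenvalues else 0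

/-- The Horodecki quantity m(ρ) = max_{j<k} (u_j + u_k). -/
def mval (ρ : Matrix (Fin 4) (Fin 4) ℂ) : ℝ :=
  (Finset.univ.filter (fun p : Fin 3 × Fin 3 => p.1 < p.2)).sup'
    (by decide) (fun p => evalsR (Umat ρ) p.1 + evalsR (Umat ρ) p.2)

/-- Normalized linear entropy S_L(ρ) = (4/3)(1 − tr ρ²). -/
def linEntropy (ρ : Matrix (Fin 4) (Fin 4) ℂ) : ℝ :=
  (4/3) * (1 - ((ρ * ρ).trace).re)

/-- The class E₀ state with parameters a, b, c, θ. -/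
def rhoE0 (a b c θ : ℝ) : Matrix (Fin 4) (Fin 4) ℂ :=
  !![0, 0, 0, 0;
     0, (a : ℂ), (c/2 : ℂ) * Complex.exp (θ * Complex.I), 0;
     0, (c/2 : ℂ) * Complex.exp (-θ * Complex.I), (b : ℂ), 0;
     0, 0, 0, ((1 - a - b : ℝ) : ℂ)]

/-- The maximal-CHSH-violation states ρ_MVB. -/
def rhoMVB (β θ : ℝ) : Matrix (Fin 4) (Fin 4) ℂ :=
  rhoE0 (1/2) (1/2) (Real.sqrt (β - 1)) θ

/-- Separability of a two-qubit state: a convex combination of product states. -/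
def IsSeparableState (ρ : Matrix (Fin 4) (Fin 4) ℂ) : Prop :=
  ∃ (n : ℕ) (w : Fin n → ℝ) (A B : Fin n → Matrix (Fin 2) (Fin 2) ℂ),
    (∀ i, 0 ≤ w i) ∧ (∑ i, w i = 1) ∧
    (∀ i, IsDensity (A i)) ∧ (∀ i, IsDensity (B i)) ∧
    ρ = ∑ i, (w i : ℂ) • kron4 (A i) (B i)

lemma pauli_herm (n : Fin 3) : (pauli n).IsHermitian := by
  fin_cases n <;>
    · ext i j
      fin_cases i <;> fin_cases j <;> simp [pauli, Matrix.conjTranspose_apply]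

lemma kron4_mul (A B C D : Matrix (Fin 2) (Fin 2) ℂ) :
    kron4 A B * kron4 C D = kron4 (A * C) (B * D) := by
  simp only [kron4, reindex_apply]
  rw [submatrix_mul_equiv, mul_kronecker_mul]

lemma trace_reindex {m n : Type*} [Fintype m] [Fintype n] [DecidableEq m] [DecidableEq n]
    (e : m ≃ n) (M : Matrix m m ℂ) :
    (Matrix.reindex e e M).trace = M.trace := by
  simp only [reindex_apply, Matrix.trace, Matrix.diag, submatrix_apply]
  exact Fintype.sum_equiv e.symm _ _ fun i => rfl

lemma trace_kron4 (A B : Matrix (Fin 2) (Fin 2) ℂ) :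
    (kron4 A B).trace = A.trace * B.trace := by
  rw [kron4, trace_reindex, trace_kronecker]

lemma trace_mul_pauli_real {A : Matrix (Fin 2) (Fin 2) ℂ} (hA : A.IsHermitian) (n : Fin 3) :
    (A * pauli n).trace = (((A * pauli n).trace).re : ℂ) := by
  have h : (starRingEnd ℂ) ((A * pauli n).trace) = (A * pauli n).trace := by
    have := Matrix.trace_conjTranspose (A * pauli n)
    rw [conjTranspose_mul, hA.eq, (pauli_herm n).eq, trace_mul_comm] at this
    exact this.symm
  exact (Complex.conj_eq_iff_re.mp h).symm

/-- Bloch-vector norm bound for a one-qubit density matrix. -/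
lemma bloch_bound {A : Matrix (Fin 2) (Fin 2) ℂ} (hA : IsDensity A) :
    ∑ n : Fin 3, ((A * pauli n).trace).re ^ 2 ≤ 1 := by
  obtain ⟨hpsd, htr⟩ := hA
  have hherm := hpsd.1
  have h10 : A 1 0 = starRingEnd ℂ (A 0 1) := by
    have := congrFun (congrFun hherm.eq 1) 0
    simpa [Matrix.conjTranspose_apply] using this.symm
  -- diagonal entries are real
  have h00 : (A 0 0).im = 0 := by
    have := congrFun (congrFun hherm.eq 0) 0
    simp only [Matrix.conjTranspose_apply] at this
    have h := congrArg Complex.im this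
    simp at h; linarith
  have h11 : (A 1 1).im = 0 := by
    have := congrFun (congrFun hherm.eq 1) 1
    simp only [Matrix.conjTranspose_apply] at this
    have h := congrArg Complex.im this
    simp at h; linarith
  -- trace condition
  have htr' : (A 0 0).re + (A 1 1).re = 1 := by
    have := congrArg Complex.re htr
    simpa [Matrix.trace_fin_two] using this
  -- determinant nonneg
  have hdet : 0 ≤ (A.det).re := by
    rw [hherm.det_eq_prod_eigenvalues]
    rw [Fin.prod_univ_two]
    have h0 := hpsd.eigenvalues_nonneg 0
    have h1 := hpsd.eigenvalues_nonneg 1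
    simp [Complex.mul_re, RCLike.ofReal_re, RCLike.ofReal_im]
    positivity
  have hdet' : (A 0 0).re * (A 1 1).re - Complex.normSq (A 0 1) ≥ 0 := by
    rw [Matrix.det_fin_two, h10] at hdet
    have : ((A 0 0) * (A 1 1) - A 0 1 * (starRingEnd ℂ) (A 0 1)).re
        = (A 0 0).re * (A 1 1).re - Complex.normSq (A 0 1) := by
      simp [Complex.sub_re, Complex.mul_re, h00, h11, Complex.normSq_apply,
        Complex.conj_re, Complex.conj_im]
    linarith [hdet, this ▸ hdet]
  -- compute the three traces
  have e0 : ((A * pauli 0).trace).re = (A 0 1).re + (A 1 0).re := by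
    simp [pauli, Matrix.trace_fin_two, Matrix.mul_apply, Fin.sum_univ_two]
  have e1 : ((A * pauli 1).trace).re = -(A 0 1).im + (A 1 0).im := by
    simp [pauli, Matrix.trace_fin_two, Matrix.mul_apply, Fin.sum_univ_two, Complex.mul_re]
  have e2 : ((A * pauli 2).trace).re = (A 0 0).re - (A 1 1).re := by
    simp [pauli, Matrix.trace_fin_two, Matrix.mul_apply, Fin.sum_univ_two]
    ring
  rw [Fin.sum_univ_three, e0, e1, e2, h10]
  simp only [Complex.conj_re, Complex.conj_im]
  have hnsq : Complex.normSq (A 0 1) = (A 0 1).re ^ 2 + (A 0 1).im ^ 2 := by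
    simp [Complex.normSq_apply]; ring
  nlinarith [hdet', htr', hnsq, sq_nonneg ((A 0 0).re - (A 1 1).re)]

lemma trace_eq_sum_eigenvalues {n : ℕ} {A : Matrix (Fin n) (Fin n) ℝ} (h : A.IsHermitian) :
    A.trace = ∑ i, h.eigenvalues i := by
  conv_lhs => rw [h.spectral_theorem]
  rw [Unitary.conjStarAlgAut_apply, Matrix.trace_mul_cycle, Matrix.mem_unitaryGroup_iff'.mp (IsHermitian.eigenvectorUnitary h).2,
    one_mul, Matrix.trace_diagonal]
  simp [Function.comp]

/-- m(ρ) > 1 implies entanglement. -/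
theorem entangled_of_mval_gt_one (ρ : Matrix (Fin 4) (Fin 4) ℂ)
    (hρ : IsDensity ρ) (hm : 1 < mval ρ) : ¬ IsSeparableState ρ := by
  rintro ⟨N, w, A, B, hw0, hw1, hA, hB, hρeq⟩
  set a : Fin N → Fin 3 → ℝ := fun i n => ((A i * pauli n).trace).re with ha
  set b : Fin N → Fin 3 → ℝ := fun i n => ((B i * pauli n).trace).re with hb
  -- T entries for a separable state
  have hT : ∀ nn mm : Fin 3, Tmat ρ nn mm = ∑ i, w i * (a i nn * b i mm) := by
    intro nn mm
    show ((ρ * kron4 (pauli nn) (pauli mm)).trace).re = _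
    rw [hρeq, Finset.sum_mul]
    simp_rw [smul_mul_assoc, kron4_mul, Matrix.trace_sum, Matrix.trace_smul, trace_kron4]
    have hterm : ∀ i : Fin N, (w i : ℂ) • ((A i * pauli nn).trace * (B i * pauli mm).trace)
        = ((w i * (a i nn * b i mm) : ℝ) : ℂ) := by
      intro i
      rw [trace_mul_pauli_real (hA i).1.1 nn, trace_mul_pauli_real (hB i).1.1 mm]
      push_cast
      simp [smul_eq_mul]
      exact Or.inl rfl
    rw [Finset.sum_congr rfl fun i _ => hterm i, ← Complex.ofReal_sum, Complex.ofReal_re]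
  -- Cauchy–Schwarz bound on pairwise inner products
  have key : ∀ i j : Fin N, (∑ n, a i n * a j n) * (∑ m, b i m * b j m) ≤ 1 := by
    intro i j
    have hai := bloch_bound (hA i); have haj := bloch_bound (hA j)
    have hbi := bloch_bound (hB i); have hbj := bloch_bound (hB j)
    have h1 : (∑ n, a i n * a j n) ^ 2 ≤ 1 := by
      calc (∑ n, a i n * a j n) ^ 2 ≤ (∑ n, a i n ^ 2) * ∑ n, a j n ^ 2 :=
            Finset.sum_mul_sq_le_sq_mul_sq _ _ _
        _ ≤ 1 := by
            nlinarith [Finset.sum_nonneg (fun n (_ : n ∈ Finset.univ) => sq_nonneg (a i n)),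
              Finset.sum_nonneg (fun n (_ : n ∈ Finset.univ) => sq_nonneg (a j n))]
    have h2 : (∑ m, b i m * b j m) ^ 2 ≤ 1 := by
      calc (∑ m, b i m * b j m) ^ 2 ≤ (∑ m, b i m ^ 2) * ∑ m, b j m ^ 2 :=
            Finset.sum_mul_sq_le_sq_mul_sq _ _ _
        _ ≤ 1 := by
            nlinarith [Finset.sum_nonneg (fun m (_ : m ∈ Finset.univ) => sq_nonneg (b i m)),
              Finset.sum_nonneg (fun m (_ : m ∈ Finset.univ) => sq_nonneg (b j m))]
    nlinarith [sq_nonneg ((∑ n, a i n * a j n) - (∑ m, b i m * b j m)),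
      sq_nonneg ((∑ n, a i n * a j n) + (∑ m, b i m * b j m))]
  -- Frobenius norm of T is at most 1
  have inner_eq : ∀ i j : Fin N,
      (∑ nn : Fin 3, ∑ mm : Fin 3,
        (w i * (a i nn * b i mm)) * (w j * (a j nn * b j mm)))
      = (w i * w j) * ((∑ n, a i n * a j n) * (∑ m, b i m * b j m)) := by
    intro i j
    rw [Finset.sum_mul_sum, Finset.mul_sum]
    refine Finset.sum_congr rfl fun nn _ => ?_
    rw [Finset.mul_sum]
    refine Finset.sum_congr rfl fun mm _ => ?_
    ring
  have expand : ∑ nn : Fin 3, ∑ mm : Fin 3, (Tmat ρ nn mm) ^ 2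
      = ∑ i : Fin N, ∑ j : Fin N,
          (w i * w j) * ((∑ n, a i n * a j n) * (∑ m, b i m * b j m)) := by
    have l1 : ∑ nn : Fin 3, ∑ mm : Fin 3, (Tmat ρ nn mm) ^ 2
        = ∑ nn : Fin 3, ∑ mm : Fin 3, ∑ i : Fin N, ∑ j : Fin N,
            (w i * (a i nn * b i mm)) * (w j * (a j nn * b j mm)) := by
      simp_rw [hT, sq, Finset.sum_mul_sum]
    rw [l1]
    calc ∑ nn : Fin 3, ∑ mm : Fin 3, ∑ i : Fin N, ∑ j : Fin N,
            (w i * (a i nn * b i mm)) * (w j * (a j nn * b j mm))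
        = ∑ nn : Fin 3, ∑ i : Fin N, ∑ mm : Fin 3, ∑ j : Fin N,
            (w i * (a i nn * b i mm)) * (w j * (a j nn * b j mm)) :=
          Finset.sum_congr rfl fun nn _ => Finset.sum_comm
      _ = ∑ i : Fin N, ∑ nn : Fin 3, ∑ mm : Fin 3, ∑ j : Fin N,
            (w i * (a i nn * b i mm)) * (w j * (a j nn * b j mm)) :=
          Finset.sum_comm
      _ = ∑ i : Fin N, ∑ nn : Fin 3, ∑ j : Fin N, ∑ mm : Fin 3,
            (w i * (a i nn * b i mm)) * (w j * (a j nn * b j mm)) :=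
          Finset.sum_congr rfl fun i _ => Finset.sum_congr rfl fun nn _ =>
            Finset.sum_comm
      _ = ∑ i : Fin N, ∑ j : Fin N, ∑ nn : Fin 3, ∑ mm : Fin 3,
            (w i * (a i nn * b i mm)) * (w j * (a j nn * b j mm)) :=
          Finset.sum_congr rfl fun i _ => Finset.sum_comm
      _ = _ := Finset.sum_congr rfl fun i _ => Finset.sum_congr rfl fun j _ => inner_eq i j
  have hfrob : ∑ nn : Fin 3, ∑ mm : Fin 3, (Tmat ρ nn mm) ^ 2 ≤ 1 := by
    rw [expand]
    calc ∑ i : Fin N, ∑ j : Fin N,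
            (w i * w j) * ((∑ n, a i n * a j n) * (∑ m, b i m * b j m))
        ≤ ∑ i : Fin N, ∑ j : Fin N, w i * w j :=
          Finset.sum_le_sum fun i _ => Finset.sum_le_sum fun j _ =>
            mul_le_of_le_one_right (mul_nonneg (hw0 i) (hw0 j)) (key i j)
      _ = (∑ i, w i) * (∑ j, w j) := (Finset.sum_mul_sum _ _ _ _).symm
      _ = 1 := by rw [hw1]; ring
  -- U is positive semidefinite
  have hUeq : Umat ρ = (Tmat ρ)ᴴ * Tmat ρ := by
    rw [Matrix.conjTranspose_eq_transpose_of_trivial]; rfl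
  have hUpsd : (Umat ρ).PosSemidef := by
    rw [hUeq]; exact Matrix.posSemidef_conjTranspose_mul_self _
  -- trace of U
  have htraceU : (Umat ρ).trace = ∑ nn : Fin 3, ∑ mm : Fin 3, (Tmat ρ nn mm) ^ 2 := by
    show ∑ n : Fin 3, ((Tmat ρ)ᵀ * Tmat ρ) n n = _
    simp_rw [Matrix.mul_apply, Matrix.transpose_apply, ← sq]
    exact Finset.sum_comm
  have hmle : mval ρ ≤ 1 := by
    apply Finset.sup'_le
    rintro ⟨jj, kk⟩ hp
    simp only [Finset.mem_filter, Finset.mem_univ, true_and] at hp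
    have heq : evalsR (Umat ρ) = hUpsd.1.eigenvalues := dif_pos hUpsd.1
    have hpair : evalsR (Umat ρ) jj + evalsR (Umat ρ) kk ≤ ∑ i, hUpsd.1.eigenvalues i := by
      rw [heq]
      have hsub := Finset.sum_le_sum_of_subset_of_nonneg
        (Finset.subset_univ ({jj, kk} : Finset (Fin 3)))
        (fun i _ _ => hUpsd.eigenvalues_nonneg i)
      rwa [Finset.sum_pair (ne_of_lt hp)] at hsub
    calc evalsR (Umat ρ) jj + evalsR (Umat ρ) kk
        ≤ ∑ i, hUpsd.1.eigenvalues i := hpair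
      _ = (Umat ρ).trace := (trace_eq_sum_eigenvalues hUpsd.1).symm
      _ = ∑ nn : Fin 3, ∑ mm : Fin 3, (Tmat ρ nn mm) ^ 2 := htraceU
      _ ≤ 1 := hfrob
  linarith
end
end

section
/- The matrix ρ_MVB (with ρ₂₂=ρ₃₃=1/2, ρ₂₃=(√(β-1)/2)e^{iθ}, ρ₃₂ its conjugate, other entries zero, β∈[1,2]) is a valid density matrix (positive semidefinite, trace 1), with concurrence C(ρ_MVB)=√(β-1) and linear entropy S_L(ρ_MVB)=(2/3)(2-β). -/
open Matrix Kronecker Complex ComplexOrder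

noncomputable section
open scoped Classical

lemma kron4_yy : kron4 (pauli 1) (pauli 1) =
    !![0,0,0,-1; 0,0,1,0; 0,1,0,0; -1,0,0,0] := by
  ext i j
  fin_cases i <;> fin_cases j <;>
    simp [kron4, pauli, Matrix.kroneckerMap_apply, finProdFinEquiv, Fin.divNat, Fin.modNat,
      show ((0:Fin 4):ℕ) = 0 from rfl, show ((1:Fin 4):ℕ) = 1 from rfl,
      show ((2:Fin 4):ℕ) = 2 from rfl, show ((3:Fin 4):ℕ) = 3 from rfl,
      Matrix.vecHead, Matrix.vecTail]

variable (c θ : ℝ)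

lemma exp_mul_exp_neg : Complex.exp (θ * Complex.I) * Complex.exp (-θ * Complex.I) = 1 := by
  rw [← Complex.exp_add]; ring_nf; exact Complex.exp_zero

lemma conj_exp : (starRingEnd ℂ) (Complex.exp (θ * Complex.I)) = Complex.exp (-θ * Complex.I) := by
  rw [← Complex.exp_conj]; congr 1
  simp [Complex.conj_I]

lemma conj_exp' : (starRingEnd ℂ) (Complex.exp (-θ * Complex.I)) = Complex.exp (θ * Complex.I) := by
  rw [← Complex.exp_conj]; congr 1
  simp [Complex.conj_I]

lemma conj_exp'' : (starRingEnd ℂ) (Complex.exp (-((θ:ℂ) * Complex.I))) = Complex.exp (θ * Complex.I) := by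
  rw [← Complex.exp_conj]; congr 1
  simp [Complex.conj_I]

lemma tilde_rho : tildeMat (rhoE0 (1/2) (1/2) c θ) = rhoE0 (1/2) (1/2) c θ := by
  rw [tildeMat, kron4_yy]
  ext i j
  fin_cases i <;> fin_cases j <;>
    (simp only [Matrix.mul_apply, Fin.sum_univ_four];
     simp [rhoE0, Matrix.map_apply, conj_exp, conj_exp', conj_exp'', map_div₀, Complex.conj_ofReal, map_ofNat, Matrix.vecHead, Matrix.vecTail, Function.comp]) <;>
    ring

lemma rho_trace : (rhoE0 (1/2) (1/2) c θ).trace = 1 := by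
  simp [rhoE0, Matrix.trace, Matrix.diag, Fin.sum_univ_four]

lemma exp_mul_exp_neg' : Complex.exp (θ * Complex.I) * Complex.exp (-((θ:ℂ) * Complex.I)) = 1 := by
  rw [← Complex.exp_add]; ring_nf; exact Complex.exp_zero

lemma rho_eq_MMH (hc0 : 0 ≤ c) (hc1 : c ≤ 1) :
    rhoE0 (1/2) (1/2) c θ =
      (!![0, 0; (Real.sqrt (1+c)/2 : ℂ) * Complex.exp (θ * Complex.I),
            (Real.sqrt (1-c)/2 : ℂ) * Complex.exp (θ * Complex.I);
          (Real.sqrt (1+c)/2 : ℂ), -(Real.sqrt (1-c)/2 : ℂ); 0, 0] : Matrix (Fin 4) (Fin 2) ℂ) *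
      (!![0, 0; (Real.sqrt (1+c)/2 : ℂ) * Complex.exp (θ * Complex.I),
            (Real.sqrt (1-c)/2 : ℂ) * Complex.exp (θ * Complex.I);
          (Real.sqrt (1+c)/2 : ℂ), -(Real.sqrt (1-c)/2 : ℂ); 0, 0] : Matrix (Fin 4) (Fin 2) ℂ)ᴴ := by
  have h1 : ((Real.sqrt (1+c) : ℂ)) * (Real.sqrt (1+c) : ℂ) = 1 + (c:ℂ) := by
    rw [← Complex.ofReal_mul, Real.mul_self_sqrt (by linarith)]; push_cast; ring
  have h2 : ((Real.sqrt (1-c) : ℂ)) * (Real.sqrt (1-c) : ℂ) = 1 - (c:ℂ) := by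
    rw [← Complex.ofReal_mul, Real.mul_self_sqrt (by linarith)]; push_cast; ring
  have he := exp_mul_exp_neg' θ
  have h1e : ((Real.sqrt (1+c) : ℂ)) * (Real.sqrt (1+c) : ℂ) *
      (Complex.exp (θ * Complex.I) * Complex.exp (-((θ:ℂ) * Complex.I))) = 1 + (c:ℂ) := by
    rw [he, h1, mul_one]
  have h2e : ((Real.sqrt (1-c) : ℂ)) * (Real.sqrt (1-c) : ℂ) *
      (Complex.exp (θ * Complex.I) * Complex.exp (-((θ:ℂ) * Complex.I))) = 1 - (c:ℂ) := by
    rw [he, h2, mul_one]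
  ext i j
  fin_cases i <;> fin_cases j <;>
    (simp only [Matrix.mul_apply, Fin.sum_univ_two, Matrix.conjTranspose_apply];
     simp [rhoE0, conj_exp, conj_exp', conj_exp'', map_div₀, Complex.conj_ofReal,
       Matrix.vecHead, Matrix.vecTail, Function.comp, neg_mul]) <;>
    first
      | ring1
      | linear_combination ((1/4:ℂ)) * h1e + (1/4:ℂ) * h2e
      | linear_combination (-(1/4:ℂ)) * h1e - (1/4:ℂ) * h2e
      | linear_combination ((1/4:ℂ) * Complex.exp ((θ:ℂ) * Complex.I)) * (h1 - h2)
      | linear_combination (-(1/4:ℂ) * Complex.exp ((θ:ℂ) * Complex.I)) * (h1 - h2)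
      | linear_combination ((1/4:ℂ) * Complex.exp (-((θ:ℂ) * Complex.I))) * (h1 - h2)
      | linear_combination (-(1/4:ℂ) * Complex.exp (-((θ:ℂ) * Complex.I))) * (h1 - h2)
      | linear_combination ((1/4:ℂ)) * (h1 + h2)
      | linear_combination (-(1/4:ℂ)) * (h1 + h2)
      | (push_cast; linear_combination ((1/4:ℂ)) * (h1 + h2))
      | (push_cast; linear_combination (-(1/4:ℂ)) * (h1 + h2))

lemma rho_trace_sq : ((rhoE0 (1/2) (1/2) c θ * rhoE0 (1/2) (1/2) c θ)).trace
    = ((1 + c^2)/2 : ℝ) := by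
  have he := exp_mul_exp_neg' θ
  simp only [Matrix.trace, Matrix.diag, Fin.sum_univ_four, Matrix.mul_apply]
  simp [rhoE0, Fin.sum_univ_four, neg_mul]
  push_cast
  linear_combination ((c:ℂ)^2/2) * he

lemma gamma_delta : ((c:ℂ)/2) * Complex.exp (θ * Complex.I) *
    (((c:ℂ)/2) * Complex.exp (-((θ:ℂ) * Complex.I))) = (c:ℂ)^2/4 := by
  have he := exp_mul_exp_neg' θ
  linear_combination ((c:ℂ)^2/4) * he

lemma rho_annihilate :
    rhoE0 (1/2) (1/2) c θ * rhoE0 (1/2) (1/2) c θ * rhoE0 (1/2) (1/2) c θ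
      - rhoE0 (1/2) (1/2) c θ * rhoE0 (1/2) (1/2) c θ
      + (((1 - c^2)/4 : ℝ) : ℂ) • rhoE0 (1/2) (1/2) c θ = 0 := by
  have hgd := gamma_delta c θ
  ext i j
  fin_cases i <;> fin_cases j <;>
    (simp only [Matrix.sub_apply, Matrix.add_apply, Matrix.smul_apply, Matrix.mul_apply,
       Fin.sum_univ_four, Matrix.zero_apply, smul_eq_mul];
     simp [rhoE0, neg_mul, Matrix.vecHead, Matrix.vecTail];
     try push_cast) <;>
    first
      | ring1
      | linear_combination ((1:ℂ)/2) * hgd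
      | linear_combination (-(1:ℂ)/2) * hgd
      | linear_combination ((c:ℂ)/2 * Complex.exp ((θ:ℂ) * Complex.I)) * hgd
      | linear_combination (-(c:ℂ)/2 * Complex.exp ((θ:ℂ) * Complex.I)) * hgd
      | linear_combination ((c:ℂ)/2 * Complex.exp (-((θ:ℂ) * Complex.I))) * hgd
      | linear_combination (-(c:ℂ)/2 * Complex.exp (-((θ:ℂ) * Complex.I))) * hgd

lemma rho_psd (hc0 : 0 ≤ c) (hc1 : c ≤ 1) : (rhoE0 (1/2) (1/2) c θ).PosSemidef := by
  rw [rho_eq_MMH c θ hc0 hc1]; exact Matrix.posSemidef_self_mul_conjTranspose _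

open scoped MatrixOrder in
lemma msqrt_eq {n : ℕ} {A : Matrix (Fin n) (Fin n) ℂ} (hA : A.PosSemidef) :
    msqrt A = CFC.sqrt A := by
  rw [CFC.sqrt_eq_real_sqrt A hA.nonneg, cfcₙ_eq_cfc, Matrix.IsHermitian.cfc_eq hA.1,
    IsHermitian.cfc, Unitary.conjStarAlgAut_apply, msqrt, dif_pos hA]
  rfl

open scoped MatrixOrder in
lemma msqrt_mul_self {n : ℕ} {A : Matrix (Fin n) (Fin n) ℂ} (hA : A.PosSemidef) :
    msqrt A * msqrt A = A := by
  rw [msqrt_eq hA]; exact CFC.sqrt_mul_sqrt_self A hA.nonneg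

open scoped MatrixOrder in
lemma msqrt_sq {n : ℕ} {A : Matrix (Fin n) (Fin n) ℂ} (hA : A.PosSemidef) :
    msqrt (A * A) = A := by
  have h2 : (A*A).PosSemidef := by rw [← pow_two]; exact hA.pow 2
  rw [msqrt_eq h2]; exact CFC.sqrt_mul_self A hA.nonneg

lemma hat_rho (hc0 : 0 ≤ c) (hc1 : c ≤ 1) :
    hatMat (rhoE0 (1/2) (1/2) c θ) = rhoE0 (1/2) (1/2) c θ := by
  have hψ := rho_psd c θ hc0 hc1
  rw [hatMat, tilde_rho]
  set s := msqrt (rhoE0 (1/2) (1/2) c θ) with hs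
  have hss : s * s = rhoE0 (1/2) (1/2) c θ := msqrt_mul_self hψ
  have key : s * rhoE0 (1/2) (1/2) c θ * s
      = rhoE0 (1/2) (1/2) c θ * rhoE0 (1/2) (1/2) c θ := by
    rw [← hss]; noncomm_ring
  rw [key, msqrt_sq hψ]


lemma trace_eq_sum_evals {n : ℕ} {A : Matrix (Fin n) (Fin n) ℂ} (hA : A.IsHermitian) :
    A.trace = ∑ i, (hA.eigenvalues i : ℂ) := by
  have h1 : star (hA.eigenvectorUnitary : Matrix (Fin n) (Fin n) ℂ) *
      (hA.eigenvectorUnitary : Matrix (Fin n) (Fin n) ℂ) = 1 := Unitary.coe_star_mul_self _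
  nth_rewrite 1 [hA.spectral_theorem]
  rw [Unitary.conjStarAlgAut_apply]
  rw [Matrix.trace_mul_cycle, h1, Matrix.one_mul, Matrix.trace_diagonal]
  rfl

lemma trace_sq_eq_sum_evals {n : ℕ} {A : Matrix (Fin n) (Fin n) ℂ} (hA : A.IsHermitian) :
    (A * A).trace = ∑ i, ((hA.eigenvalues i : ℂ))^2 := by
  set U : Matrix (Fin n) (Fin n) ℂ := (hA.eigenvectorUnitary : Matrix (Fin n) (Fin n) ℂ) with hU
  set D : Matrix (Fin n) (Fin n) ℂ := diagonal (RCLike.ofReal ∘ hA.eigenvalues) with hD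
  have h1 : star U * U = 1 := Unitary.coe_star_mul_self _
  have hs : A = U * D * star U := by
    have := hA.spectral_theorem; rwa [Unitary.conjStarAlgAut_apply] at this
  have : A * A = U * (D * D) * star U := by
    rw [hs]
    calc U * D * star U * (U * D * star U) = U * D * (star U * U) * D * star U := by
          noncomm_ring
      _ = U * (D * D) * star U := by rw [h1]; noncomm_ring
  rw [this, Matrix.trace_mul_cycle, ← Matrix.mul_assoc, h1, Matrix.one_mul,
    hD, Matrix.diagonal_mul_diagonal, Matrix.trace_diagonal]
  simp [sq]

lemma conc_eq (hc0 : 0 ≤ c) (hc1 : c ≤ 1) :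
    concurrence (rhoE0 (1/2) (1/2) c θ) = c := by
  have hψ := rho_psd c θ hc0 hc1
  have hherm : (rhoE0 (1/2) (1/2) c θ).IsHermitian := hψ.1
  have hE : evalsC (rhoE0 (1/2) (1/2) c θ) = hherm.eigenvalues := by
    rw [evalsC, dif_pos hherm]
  set μ : Fin 4 → ℝ := hherm.eigenvalues with hμ
  have hsum : ∑ i, μ i = 1 := by
    have h := trace_eq_sum_evals hherm
    rw [rho_trace, ← Complex.ofReal_sum] at h
    exact_mod_cast h.symm
  have hsq : ∑ i, (μ i)^2 = (1 + c^2)/2 := by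
    have h := trace_sq_eq_sum_evals hherm
    rw [rho_trace_sq] at h
    have h2 : (((1 + c^2)/2 : ℝ) : ℂ) = ((∑ i, (μ i)^2 : ℝ) : ℂ) := by
      rw [h]; norm_cast
    exact_mod_cast h2.symm
  have hmem : ∀ i, μ i = 0 ∨ μ i = (1+c)/2 ∨ μ i = (1-c)/2 := by
    intro i
    have hv := hherm.mulVec_eigenvectorBasis i
    set v : Fin 4 → ℂ := ⇑(hherm.eigenvectorBasis i) with hvdef
    have hvne : v ≠ 0 := by
      have h0 := hherm.eigenvectorBasis.orthonormal.ne_zero i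
      intro hcon; apply h0; ext j; exact congrFun hcon j
    have h1 : rhoE0 (1/2) (1/2) c θ *ᵥ v = ((μ i : ℂ)) • v := by
      rw [hv]; ext j; simp only [Pi.smul_apply, Complex.real_smul, smul_eq_mul]; rfl
    have h2 : (rhoE0 (1/2) (1/2) c θ * rhoE0 (1/2) (1/2) c θ) *ᵥ v
        = ((μ i : ℂ)^2) • v := by
      rw [← Matrix.mulVec_mulVec, h1, Matrix.mulVec_smul, h1, smul_smul, ← pow_two]
    have h3 : (rhoE0 (1/2) (1/2) c θ * rhoE0 (1/2) (1/2) c θ * rhoE0 (1/2) (1/2) c θ) *ᵥ v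
        = ((μ i : ℂ)^3) • v := by
      rw [← Matrix.mulVec_mulVec, h1, Matrix.mulVec_smul, h2, smul_smul]
      ring_nf
    have hz := congrArg (fun M => M *ᵥ v) (rho_annihilate c θ)
    simp only [Matrix.sub_mulVec, Matrix.add_mulVec, Matrix.smul_mulVec,
      Matrix.zero_mulVec, h1, h2, h3] at hz
    rw [smul_smul, ← sub_smul, ← add_smul] at hz
    rcases smul_eq_zero.mp hz with hsc | hv0
    · have hreal : (μ i)^3 - (μ i)^2 + (1 - c^2)/4 * μ i = 0 := by
        exact_mod_cast hsc
      have hfac : μ i * (μ i - (1+c)/2) * (μ i - (1-c)/2) = 0 := by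
        linear_combination hreal
      rcases mul_eq_zero.mp hfac with h' | h'
      · rcases mul_eq_zero.mp h' with h'' | h''
        · exact Or.inl h''
        · exact Or.inr (Or.inl (by linarith [sub_eq_zero.mp h'']))
      · exact Or.inr (Or.inr (by linarith [sub_eq_zero.mp h']))
    · exact absurd hv0 hvne
  have hnn : ∀ i, 0 ≤ μ i := hψ.eigenvalues_nonneg
  have hex : ∃ i, μ i = (1+c)/2 := by
    by_contra hno
    push_neg at hno
    have hall : ∀ i, μ i = 0 ∨ μ i = (1-c)/2 := by
      intro i
      rcases hmem i with h|h|h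
      · exact Or.inl h
      · exact absurd h (hno i)
      · exact Or.inr h
    have hs2 : ∀ i, (μ i)^2 = (1-c)/2 * μ i := by
      intro i; rcases hall i with h|h <;> rw [h] <;> ring
    have hkey : (1 + c^2)/2 = (1-c)/2 := by
      rw [← hsq, Finset.sum_congr rfl (fun i _ => hs2 i), ← Finset.mul_sum, hsum, mul_one]
    have hc : c = 0 := by nlinarith
    subst hc
    have hzero : ∀ i, μ i = 0 := by
      intro i
      rcases hall i with h|h
      · exact h
      · exact absurd (by rw [h]; norm_num) (hno i)
    have : (1:ℝ) = 0 := by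
      rw [← hsum, Finset.sum_congr rfl (fun i _ => hzero i)]; simp
    norm_num at this
  obtain ⟨i0, hi0⟩ := hex
  have hsup : (⨆ i, μ i) = (1+c)/2 := by
    apply le_antisymm
    · exact ciSup_le fun i => by rcases hmem i with h|h|h <;> rw [h] <;> linarith
    · rw [← hi0]
      exact le_ciSup (Set.Finite.bddAbove (Set.finite_range μ)) i0
  rw [concurrence, hat_rho c θ hc0 hc1, hE]
  rw [show (μ = hherm.eigenvalues) from hμ] at hsup hsum
  rw [hsup, hsum]
  rw [show 2 * ((1+c)/2) - 1 = c by ring]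
  exact max_eq_right hc0

lemma linEnt_eq : linEntropy (rhoE0 (1/2) (1/2) c θ) = (2/3) * (1 - c^2) := by
  rw [linEntropy, rho_trace_sq, Complex.ofReal_re]
  ring

/-- ρ_MVB is a density matrix with C = √(β−1) and
S_L = (2/3)(2−β). -/
theorem rhoMVB_properties (β θ : ℝ) (hβ1 : 1 ≤ β) (hβ2 : β ≤ 2) :
    IsDensity (rhoMVB β θ) ∧
    concurrence (rhoMVB β θ) = Real.sqrt (β - 1) ∧
    linEntropy (rhoMVB β θ) = (2/3) * (2 - β) := by
  have hb0 : 0 ≤ β - 1 := by linarith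
  have hc0 : 0 ≤ Real.sqrt (β - 1) := Real.sqrt_nonneg _
  have hc1 : Real.sqrt (β - 1) ≤ 1 := Real.sqrt_le_one.mpr (by linarith)
  have hc2 : (Real.sqrt (β - 1))^2 = β - 1 := Real.sq_sqrt hb0
  refine ⟨⟨rho_psd _ θ hc0 hc1, rho_trace _ θ⟩, conc_eq _ θ hc0 hc1, ?_⟩
  rw [show rhoMVB β θ = rhoE0 (1/2) (1/2) (Real.sqrt (β - 1)) θ from rfl, linEnt_eq, hc2]
  ring

end
end
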